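/- Let $E_1,\dots,E_{n+1},F$ be Banach spaces (over the real or complex field), $1<p<\infty$, $1/p+1/p^*=1$. If $T:E_1\times\cdots\times E_n\to F$ is a multiple Cohen strongly $p$-summing $n$-linear operator and $\gamma\in E_{n+1}'$, then the $(n+1)$-linear operator $\gamma T:E_1\times\cdots\times E_{n+1}\to F$, $(\gamma T)(x_1,\dots,x_{n+1})=\gamma(x_{n+1})\,T(x_1,\dots,x_n)$, is multiple Cohen strongly $p$-summing and $\|\gamma T\|_{mCoh,p}\le\|\gamma\|\,\|T\|_{mCoh,p}$. -/

import Mathlib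

open scoped BigOperators

/-- The weak `q`-norm of a finite family of continuous linear functionals on `F`. -/
noncomputable def weakNorm {𝕜 F : Type*} [RCLike 𝕜] [NormedAddCommGroup F] [NormedSpace 𝕜 F]
    {ι : Type*} [Fintype ι] (q : ℝ) (φ : ι → F →L[𝕜] 𝕜) : ℝ :=
  ⨆ y : Metric.closedBall (0 : F) 1, (∑ i, ‖φ i (y : F)‖ ^ q) ^ (1 / q)

/-- `T` is multiple Cohen strongly `p`-summing with constant `C`. -/
def MCohIneq (𝕜 : Type*) [RCLike 𝕜] {n : ℕ} {E : Fin n → Type*}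
    [∀ k, NormedAddCommGroup (E k)] [∀ k, NormedSpace 𝕜 (E k)]
    {F : Type*} [NormedAddCommGroup F] [NormedSpace 𝕜 F]
    (p q : ℝ) (T : (∀ k, E k) → F) (C : ℝ) : Prop :=
  ∀ (m : ℕ) (x : ∀ k, Fin m → E k) (φ : (Fin n → Fin m) → F →L[𝕜] 𝕜),
    ∑ α : Fin n → Fin m, ‖φ α (T (fun k => x k (α k)))‖ ≤
      C * (∏ k, (∑ j, ‖x k j‖ ^ p) ^ (1 / p)) * weakNorm q φ

/-- The multiple Cohen strongly `p`-summing norm: the smallest admissible constant. -/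
noncomputable def mCohNorm (𝕜 : Type*) [RCLike 𝕜] {n : ℕ} {E : Fin n → Type*}
    [∀ k, NormedAddCommGroup (E k)] [∀ k, NormedSpace 𝕜 (E k)]
    {F : Type*} [NormedAddCommGroup F] [NormedSpace 𝕜 F]
    (p q : ℝ) (T : (∀ k, E k) → F) : ℝ :=
  sInf {C : ℝ | 0 ≤ C ∧ MCohIneq 𝕜 p q T C}

/-!
Splitting off the last index, `∑_α |φ_α((γT)(x_α))| = ∑_β ∑_j |γ(x_j)| |φ_{β,j}(T x_β)|`.
Multiplying each `φ_{β,j}` by a scalar `θ_{β,j}` of modulus at most 1 that makes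
`θ_{β,j} φ_{β,j}(T x_β)` nonnegative, the inner sum becomes `|ψ_β(T x_β)|` for the single functional
`ψ_β = ∑_j |γ(x_j)| θ_{β,j} φ_{β,j}`, so the inequality for `T` applies to `(ψ_β)_β`.
Hölder's inequality in `j` gives `‖(ψ_β)‖_{w,q} ≤ ‖(γ(x_j))_j‖_p ‖(φ_α)‖_{w,q}`, and
`‖(γ(x_j))_j‖_p ≤ ‖γ‖ ‖(x_j)_j‖_p`.
-/

lemma RCLike.exists_norm_le_one_mul_eq_norm {𝕜 : Type*} [RCLike 𝕜] (z : 𝕜) :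
    ∃ θ : 𝕜, ‖θ‖ ≤ 1 ∧ θ * z = ‖z‖ := by
  refine ⟨starRingEnd 𝕜 z / ‖z‖, ?_, ?_⟩
  · rw [norm_div, RCLike.norm_conj, RCLike.norm_ofReal, abs_norm]
    exact div_self_le_one _
  · rcases eq_or_ne z 0 with rfl | hz
    · simp
    · rw [div_mul_eq_mul_div, RCLike.conj_mul, pow_two, mul_div_assoc,
        div_self (RCLike.ofReal_ne_zero.mpr (norm_ne_zero_iff.mpr hz)), mul_one]

lemma Real.rpow_sum_rpow_le_mul {ι : Type*} (s : Finset ι) {p c : ℝ} (hp : 0 < p) (hc : 0 ≤ c)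
    {a b : ι → ℝ} (ha : ∀ i, 0 ≤ a i) (hb : ∀ i, 0 ≤ b i) (hab : ∀ i, a i ≤ c * b i) :
    (∑ i ∈ s, a i ^ p) ^ (1 / p) ≤ c * (∑ i ∈ s, b i ^ p) ^ (1 / p) := by
  have hsum : ∑ i ∈ s, a i ^ p ≤ c ^ p * ∑ i ∈ s, b i ^ p := by
    rw [Finset.mul_sum]
    gcongr with i
    rw [← Real.mul_rpow hc (hb i)]
    exact Real.rpow_le_rpow (ha i) (hab i) hp.le
  calc (∑ i ∈ s, a i ^ p) ^ (1 / p) ≤ (c ^ p * ∑ i ∈ s, b i ^ p) ^ (1 / p) := by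
        gcongr
        exact Finset.sum_nonneg fun i _ => Real.rpow_nonneg (ha i) p
    _ = c * (∑ i ∈ s, b i ^ p) ^ (1 / p) := by
        rw [Real.mul_rpow (by positivity)
          (Finset.sum_nonneg fun i _ => Real.rpow_nonneg (hb i) p), one_div,
          Real.rpow_rpow_inv hc hp.ne']

section weakNorm

variable {𝕜 F : Type*} [RCLike 𝕜] [NormedAddCommGroup F] [NormedSpace 𝕜 F]
  {ι κ : Type*} [Fintype ι] [Fintype κ] {q : ℝ}

lemma weakNorm_nonneg (φ : ι → F →L[𝕜] 𝕜) : 0 ≤ weakNorm q φ :=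
  Real.iSup_nonneg fun _ => Real.rpow_nonneg
    (Finset.sum_nonneg fun _ _ => Real.rpow_nonneg (norm_nonneg _) _) _

lemma le_weakNorm (hq : 0 < q) (φ : ι → F →L[𝕜] 𝕜) {y : F} (hy : ‖y‖ ≤ 1) :
    (∑ i, ‖φ i y‖ ^ q) ^ (1 / q) ≤ weakNorm q φ := by
  refine le_ciSup (f := fun y : Metric.closedBall (0 : F) 1 => (∑ i, ‖φ i y‖ ^ q) ^ (1 / q))
    ⟨(∑ i, ‖φ i‖ ^ q) ^ (1 / q), ?_⟩ ⟨y, mem_closedBall_zero_iff.mpr hy⟩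
  rintro _ ⟨z, rfl⟩
  have hz : ‖(z : F)‖ ≤ 1 := mem_closedBall_zero_iff.mp z.2
  refine Real.rpow_le_rpow (by positivity) (Finset.sum_le_sum fun i _ => ?_) (by positivity)
  refine Real.rpow_le_rpow (norm_nonneg _) ?_ hq.le
  exact (φ i).le_of_opNorm_le_of_le le_rfl hz |>.trans_eq (mul_one _)

lemma weakNorm_le {φ : ι → F →L[𝕜] 𝕜} {B : ℝ} (hB : 0 ≤ B)
    (h : ∀ y : F, ‖y‖ ≤ 1 → (∑ i, ‖φ i y‖ ^ q) ^ (1 / q) ≤ B) : weakNorm q φ ≤ B :=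
  Real.iSup_le (fun y => h y (mem_closedBall_zero_iff.mp y.2)) hB

lemma weakNorm_comp_equiv (φ : ι → F →L[𝕜] 𝕜) (e : κ ≃ ι) :
    weakNorm q (φ ∘ e) = weakNorm q φ := by
  simp only [weakNorm, Function.comp_apply]
  congr! 3
  exact Equiv.sum_comp e (fun i => ‖φ i _‖ ^ q)

lemma weakNorm_sum_smul_le {p : ℝ} (hpq : p.HolderConjugate q) (φ : κ × ι → F →L[𝕜] 𝕜)
    {c : ι → κ → 𝕜} {a : κ → ℝ} (ha : ∀ j, 0 ≤ a j) (hc : ∀ i j, ‖c i j‖ ≤ a j) :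
    weakNorm q (fun i => ∑ j, c i j • φ (j, i)) ≤ (∑ j, a j ^ p) ^ (1 / p) * weakNorm q φ := by
  have hq := hpq.symm.pos
  set A := (∑ j, a j ^ p) ^ (1 / p)
  have hA : 0 ≤ A := Real.rpow_nonneg (Finset.sum_nonneg fun j _ => Real.rpow_nonneg (ha j) p) _
  refine weakNorm_le (mul_nonneg hA (weakNorm_nonneg φ)) fun y hy => ?_
  have hrow : ∀ i, ‖∑ j, c i j • φ (j, i) y‖ ≤ A * (∑ j, ‖φ (j, i) y‖ ^ q) ^ (1 / q) := by
    intro i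
    calc ‖∑ j, c i j • φ (j, i) y‖ ≤ ∑ j, a j * ‖φ (j, i) y‖ := by
          refine (norm_sum_le _ _).trans (Finset.sum_le_sum fun j _ => ?_)
          rw [norm_smul]
          gcongr
          exact hc i j
      _ ≤ A * (∑ j, ‖φ (j, i) y‖ ^ q) ^ (1 / q) :=
          Real.inner_le_Lp_mul_Lq_of_nonneg _ hpq (fun j _ => ha j) (fun _ _ => norm_nonneg _)
  calc (∑ i, ‖(∑ j, c i j • φ (j, i)) y‖ ^ q) ^ (1 / q)
      ≤ A * (∑ i, ((∑ j, ‖φ (j, i) y‖ ^ q) ^ (1 / q)) ^ q) ^ (1 / q) := by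
        refine Real.rpow_sum_rpow_le_mul _ hq hA (fun _ => norm_nonneg _)
          (fun _ => by positivity) fun i => ?_
        simpa only [FunLike.coe_sum, Finset.sum_apply,
          FunLike.coe_smul, Pi.smul_apply] using hrow i
    _ = A * (∑ ji : κ × ι, ‖φ ji y‖ ^ q) ^ (1 / q) := by
        rw [Fintype.sum_prod_type, Finset.sum_comm]
        congr 2
        refine Finset.sum_congr rfl fun i _ => ?_
        rw [one_div, Real.rpow_inv_rpow (by positivity) hq.ne']
    _ ≤ A * weakNorm q φ := by gcongr; exact le_weakNorm hq φ hy

end weakNorm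

section MCoh

variable {𝕜 : Type*} [RCLike 𝕜] {F : Type*} [NormedAddCommGroup F] [NormedSpace 𝕜 F]
  {p q : ℝ}

lemma MCohIneq.mono {n : ℕ} {E : Fin n → Type*} [∀ k, NormedAddCommGroup (E k)]
    [∀ k, NormedSpace 𝕜 (E k)] {T : (∀ k, E k) → F} {C C' : ℝ} (hT : MCohIneq 𝕜 p q T C)
    (hCC' : C ≤ C') : MCohIneq 𝕜 p q T C' := by
  intro m x φ
  refine (hT m x φ).trans ?_
  have hprod : 0 ≤ ∏ k, (∑ j, ‖x k j‖ ^ p) ^ (1 / p) :=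
    Finset.prod_nonneg fun _ _ => Real.rpow_nonneg (Finset.sum_nonneg fun _ _ => by positivity) _
  gcongr
  exact weakNorm_nonneg φ

lemma mCohNorm_le_mul_of_forall {n n' : ℕ} {E : Fin n → Type*} [∀ k, NormedAddCommGroup (E k)]
    [∀ k, NormedSpace 𝕜 (E k)] {E' : Fin n' → Type*} [∀ k, NormedAddCommGroup (E' k)]
    [∀ k, NormedSpace 𝕜 (E' k)] {F' : Type*} [NormedAddCommGroup F'] [NormedSpace 𝕜 F']
    {S : (∀ k, E k) → F} {T : (∀ k, E' k) → F'} {a : ℝ} (ha : 0 ≤ a)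
    (hT : ∃ C, 0 ≤ C ∧ MCohIneq 𝕜 p q T C)
    (h : ∀ C, 0 ≤ C → MCohIneq 𝕜 p q T C → MCohIneq 𝕜 p q S (a * C)) :
    mCohNorm 𝕜 p q S ≤ a * mCohNorm 𝕜 p q T := by
  rw [mCohNorm, mCohNorm, ← smul_eq_mul, ← Real.sInf_smul_of_nonneg ha]
  refine csInf_le_csInf ⟨0, fun _ hC => hC.1⟩ (Set.Nonempty.smul_set hT) ?_
  rintro _ ⟨C, ⟨hC0, hC⟩, rfl⟩
  exact ⟨mul_nonneg ha hC0, h C hC0 hC⟩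

theorem MCohIneq.smul_last {n : ℕ} {E : Fin (n + 1) → Type*}
    [∀ k, NormedAddCommGroup (E k)] [∀ k, NormedSpace 𝕜 (E k)] (hpq : p.HolderConjugate q)
    {T : (∀ k : Fin n, E k.castSucc) → F} {D : ℝ} (hD : 0 ≤ D) (hT : MCohIneq 𝕜 p q T D)
    (γ : E (Fin.last n) →L[𝕜] 𝕜) :
    MCohIneq 𝕜 p q (fun x => γ (x (Fin.last n)) • T (fun k => x k.castSucc)) (‖γ‖ * D) := by
  intro m x φ
  set a : Fin m → ℝ := fun j => ‖γ (x (Fin.last n) j)‖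
  set Tx : (Fin n → Fin m) → F := fun β => T fun k => x k.castSucc (β k)
  choose θ hθ1 hθ using fun β j => RCLike.exists_norm_le_one_mul_eq_norm (φ (Fin.snoc β j) (Tx β))
  set ψ : (Fin n → Fin m) → F →L[𝕜] 𝕜 := fun β => ∑ j, ((a j : 𝕜) * θ β j) • φ (Fin.snoc β j)
  have hψ : ∀ β, ‖ψ β (Tx β)‖ = ∑ j, a j * ‖φ (Fin.snoc β j) (Tx β)‖ := by
    intro β
    have : ψ β (Tx β) = ((∑ j, a j * ‖φ (Fin.snoc β j) (Tx β)‖ : ℝ) : 𝕜) := by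
      simp only [ψ, FunLike.coe_sum, Finset.sum_apply, FunLike.coe_smul, Pi.smul_apply,
        smul_eq_mul, mul_assoc, hθ]
      push_cast
      rfl
    rw [this, RCLike.norm_ofReal, abs_of_nonneg (by positivity)]
  have hsplit : ∑ α : Fin (n + 1) → Fin m,
      ‖φ α (γ (x (Fin.last n) (α (Fin.last n))) • T fun k => x k.castSucc (α k.castSucc))‖ =
      ∑ β, ‖ψ β (Tx β)‖ := by
    rw [← Equiv.sum_comp (Fin.snocEquiv fun _ => Fin m), Fintype.sum_prod_type, Finset.sum_comm]
    refine Finset.sum_congr rfl fun β _ => ?_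
    rw [hψ]
    refine Finset.sum_congr rfl fun j _ => ?_
    simp only [Fin.snocEquiv_apply, Fin.snoc_last, Fin.snoc_castSucc, map_smul, norm_smul]
    rfl
  have hweak : weakNorm q ψ ≤ (∑ j, a j ^ p) ^ (1 / p) * weakNorm q φ := by
    have hc : ∀ β j, ‖(a j : 𝕜) * θ β j‖ ≤ a j := fun β j => by
      rw [norm_mul, RCLike.norm_ofReal, abs_norm]
      exact mul_le_of_le_one_right (norm_nonneg _) (hθ1 β j)
    have := weakNorm_sum_smul_le hpq (φ ∘ Fin.snocEquiv fun _ => Fin m)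
      (fun j => norm_nonneg _) hc
    rwa [weakNorm_comp_equiv] at this
  have ha : (∑ j, a j ^ p) ^ (1 / p) ≤ ‖γ‖ * (∑ j, ‖x (Fin.last n) j‖ ^ p) ^ (1 / p) :=
    Real.rpow_sum_rpow_le_mul _ hpq.pos (norm_nonneg γ) (fun _ => norm_nonneg _)
      (fun _ => norm_nonneg _) fun j => γ.le_opNorm _
  set P := ∏ k : Fin n, (∑ j, ‖x k.castSucc j‖ ^ p) ^ (1 / p)
  have hP : 0 ≤ P :=
    Finset.prod_nonneg fun _ _ => Real.rpow_nonneg (Finset.sum_nonneg fun _ _ => by positivity) _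
  calc _ = ∑ β, ‖ψ β (Tx β)‖ := hsplit
    _ ≤ D * P * weakNorm q ψ := hT m (fun k => x k.castSucc) ψ
    _ ≤ D * P * (‖γ‖ * (∑ j, ‖x (Fin.last n) j‖ ^ p) ^ (1 / p) * weakNorm q φ) := by
        gcongr
        exact hweak.trans (by gcongr; exact weakNorm_nonneg φ)
    _ = ‖γ‖ * D * (∏ k, (∑ j, ‖x k j‖ ^ p) ^ (1 / p)) * weakNorm q φ := by
        rw [Fin.prod_univ_castSucc]
        ring

end MCoh

theorem stmt19_general {𝕜 : Type*} [RCLike 𝕜] {n : ℕ}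
    {E : Fin (n + 1) → Type*} [∀ k, NormedAddCommGroup (E k)] [∀ k, NormedSpace 𝕜 (E k)]
    {F : Type*} [NormedAddCommGroup F] [NormedSpace 𝕜 F]
    (p q : ℝ) (hp : 1 < p) (hq : 1 / p + 1 / q = 1)
    (T : ContinuousMultilinearMap 𝕜 (fun k : Fin n => E k.castSucc) F)
    (hT : ∃ C > 0, MCohIneq 𝕜 p q (⇑T) C) (γ : E (Fin.last n) →L[𝕜] 𝕜) :
    (∃ C > 0, MCohIneq 𝕜 p q
        (fun x : ∀ k : Fin (n + 1), E k =>
          γ (x (Fin.last n)) • T (fun k : Fin n => x k.castSucc)) C) ∧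
      mCohNorm 𝕜 p q
        (fun x : ∀ k : Fin (n + 1), E k =>
          γ (x (Fin.last n)) • T (fun k : Fin n => x k.castSucc)) ≤
        ‖γ‖ * mCohNorm 𝕜 p q (⇑T) := by
  have hpq : p.HolderConjugate q :=
    Real.holderConjugate_iff.mpr ⟨hp, by simpa only [one_div] using hq⟩
  obtain ⟨C, hC0, hC⟩ := hT
  refine ⟨⟨‖γ‖ * C + 1, by positivity, (hC.smul_last hpq hC0.le γ).mono (by linarith)⟩, ?_⟩
  exact mCohNorm_le_mul_of_forall (norm_nonneg γ) ⟨C, hC0.le, hC⟩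
    fun D hD hTD => hTD.smul_last hpq hD γ

/-- If `T : E₁ × ⋯ × Eₙ → F` is a multiple Cohen strongly `p`-summing `n`-linear operator
and `γ ∈ E_{n+1}'`, then the `(n+1)`-linear operator
`(γT)(x₁,…,x_{n+1}) = γ(x_{n+1}) T(x₁,…,xₙ)` is multiple Cohen strongly `p`-summing and
`‖γT‖_{mCoh,p} ≤ ‖γ‖ ‖T‖_{mCoh,p}`. -/
theorem stmt19 {𝕜 : Type*} [RCLike 𝕜] {n : ℕ}
    {E : Fin (n + 1) → Type*} [∀ k, NormedAddCommGroup (E k)] [∀ k, NormedSpace 𝕜 (E k)]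
    [∀ k, CompleteSpace (E k)]
    {F : Type*} [NormedAddCommGroup F] [NormedSpace 𝕜 F] [CompleteSpace F]
    (p q : ℝ) (hp : 1 < p) (hq : 1 / p + 1 / q = 1)
    (T : ContinuousMultilinearMap 𝕜 (fun k : Fin n => E k.castSucc) F)
    (hT : ∃ C > 0, MCohIneq 𝕜 p q (⇑T) C) (γ : E (Fin.last n) →L[𝕜] 𝕜) :
    (∃ C > 0, MCohIneq 𝕜 p q
        (fun x : ∀ k : Fin (n + 1), E k =>
          γ (x (Fin.last n)) • T (fun k : Fin n => x k.castSucc)) C) ∧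
      mCohNorm 𝕜 p q
        (fun x : ∀ k : Fin (n + 1), E k =>
          γ (x (Fin.last n)) • T (fun k : Fin n => x k.castSucc)) ≤
        ‖γ‖ * mCohNorm 𝕜 p q (⇑T) :=
  stmt19_general p q hp hq T hT γ
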